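/- If a connected graph G has at most three triangles, then the competition number of G is at most the dimension of the hole space of G plus one, i.e., k(G) ≤ dim H(G) + 1. -/

import Mathlib

/-!
Repeatedly deleting a non-cut vertex that lies on at most one triangle ranks the vertices and
gives each vertex `v` a clique above it: the triangle through `v`, or an edge going up. These
cliques cover every triangle, and their union `H` is a connected spanning subgraph. Letting each
clique prey on the predecessor of its vertex (the lowest one on an extra isolated vertex), and
each edge outside `H` on an isolated vertex of its own, gives `k(G) ≤ |E(G) \ E(H)| + 1`. Over
`𝔽₂` the fundamental cycles of the edges outside `H` are sums of holes and triangles; restricted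
to `E(G) \ E(H)` the triangles vanish and these cycles form the standard basis, so
`|E(G) \ E(H)| ≤ dim H(G)`.
-/

open SimpleGraph

/-- A digraph (given as a relation) is acyclic if it has no directed cycle,
i.e., no vertex reaches itself by a nonempty directed walk. -/
def DigraphAcyclic {α : Type*} (D : α → α → Prop) : Prop :=
  ∀ a : α, ¬ Relation.TransGen D a a

/-- `G` is the competition graph of the digraph `D`: two distinct vertices are
adjacent iff they have a common out-neighbor. -/
def IsCompetitionGraphOf {α : Type*} (G : SimpleGraph α) (D : α → α → Prop) : Prop :=
  ∀ x y : α, G.Adj x y ↔ x ≠ y ∧ ∃ v : α, D x v ∧ D y v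

/-- The graph `G` together with `k` additional isolated vertices. -/
def addIsolated {V : Type*} (G : SimpleGraph V) (k : ℕ) : SimpleGraph (V ⊕ Fin k) :=
  SimpleGraph.fromRel (fun x y => ∃ a b : V, x = Sum.inl a ∧ y = Sum.inl b ∧ G.Adj a b)

/-- The competition number of `G`: the smallest `k` such that `G` together with
`k` isolated vertices is the competition graph of some acyclic digraph. -/
noncomputable def competitionNumber {V : Type*} (G : SimpleGraph V) : ℕ :=
  sInf {k : ℕ | ∃ D : (V ⊕ Fin k) → (V ⊕ Fin k) → Prop,
    DigraphAcyclic D ∧ IsCompetitionGraphOf (addIsolated G k) D}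

/-- A hole of `G`: an induced (chordless) cycle of length at least 4. -/
def IsHole {V : Type*} (G : SimpleGraph V) {v : V} (w : G.Walk v v) : Prop :=
  w.IsCycle ∧ 4 ≤ w.length ∧
    ∀ x y : V, x ∈ w.support → y ∈ w.support → G.Adj x y → s(x, y) ∈ w.edges

/-- An induced (chordless) cycle of `G`. -/
def IsInducedCycle {V : Type*} (G : SimpleGraph V) {v : V} (w : G.Walk v v) : Prop :=
  w.IsCycle ∧
    ∀ x y : V, x ∈ w.support → y ∈ w.support → G.Adj x y → s(x, y) ∈ w.edges

open Classical in
/-- The characteristic vector in 𝔽₂^{E(G)} of (the edge set of) a closed walk. -/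
noncomputable def cycleVec {V : Type*} (G : SimpleGraph V) {H : SimpleGraph V} {v : V}
    (w : H.Walk v v) : G.edgeSet → ZMod 2 :=
  fun e => if (e : Sym2 V) ∈ w.edges then 1 else 0

/-- The hole space of `G`: the 𝔽₂-span of the characteristic vectors of the holes. -/
def holeSpace {V : Type*} (G : SimpleGraph V) : Submodule (ZMod 2) (G.edgeSet → ZMod 2) :=
  Submodule.span (ZMod 2)
    {f | ∃ (v : V) (w : G.Walk v v), IsHole G w ∧ f = cycleVec G w}

/-- The dimension of the hole space of `G`. -/
noncomputable def holeDim {V : Type*} (G : SimpleGraph V) : ℕ :=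
  Module.finrank (ZMod 2) (holeSpace G)

/-- The edge sets of the holes of `G`; distinct holes correspond to distinct edge sets. -/
def holeEdgeSets {V : Type*} (G : SimpleGraph V) : Set (Set (Sym2 V)) :=
  {E | ∃ (v : V) (w : G.Walk v v), IsHole G w ∧ E = {e | e ∈ w.edges}}

/-- The edge sets of the induced cycles of `G`. -/
def inducedCycleEdgeSets {V : Type*} (G : SimpleGraph V) : Set (Set (Sym2 V)) :=
  {E | ∃ (v : V) (w : G.Walk v v), IsInducedCycle G w ∧ E = {e | e ∈ w.edges}}

/-- The number of holes of `G`. -/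
noncomputable def numHoles {V : Type*} (G : SimpleGraph V) : ℕ :=
  (holeEdgeSets G).ncard

/-- A graph is chordal if it has no holes. -/
def IsChordalGraph {V : Type*} (G : SimpleGraph V) : Prop :=
  ∀ (v : V) (w : G.Walk v v), ¬ IsHole G w

open Function

section

variable {V : Type*}

lemma addIsolated_adj {G : SimpleGraph V} {k : ℕ} {X Y : V ⊕ Fin k} :
    (addIsolated G k).Adj X Y ↔ ∃ a b, X = Sum.inl a ∧ Y = Sum.inl b ∧ G.Adj a b := by
  rw [addIsolated, fromRel_adj]
  constructor
  · rintro ⟨-, ⟨a, b, rfl, rfl, hab⟩ | ⟨a, b, rfl, rfl, hab⟩⟩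
    exacts [⟨a, b, rfl, rfl, hab⟩, ⟨b, a, rfl, rfl, hab.symm⟩]
  · rintro ⟨a, b, rfl, rfl, hab⟩
    exact ⟨by simpa using hab.ne, Or.inl ⟨a, b, rfl, rfl, hab⟩⟩

/-- Each clique `C i` preys on the sink `σ i`; the ranks `r` make the resulting digraph acyclic. -/
theorem competitionNumber_le_of_cliques {ι : Type*} {G : SimpleGraph V} {k : ℕ}
    (C : ι → Set V) (σ : ι → V ⊕ Fin k) (r : V → ℕ)
    (hclique : ∀ i, G.IsClique (C i)) (hcover : ∀ a b, G.Adj a b → ∃ i, a ∈ C i ∧ b ∈ C i)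
    (hσ : Injective σ) (hr : ∀ i, ∀ a ∈ C i, ∀ b, σ i = Sum.inl b → r b < r a) :
    competitionNumber G ≤ k := by
  let D : V ⊕ Fin k → V ⊕ Fin k → Prop := fun X Y => ∃ a i, X = Sum.inl a ∧ a ∈ C i ∧ σ i = Y
  let Φ : V ⊕ Fin k → ℕ := Sum.elim (r · + 1) 0
  have hΦ : ∀ X Y, D X Y → Φ Y < Φ X := by
    rintro _ (_ | b) ⟨a, i, rfl, ha, hi⟩
    · simpa [Φ] using hr i a ha _ hi
    · simp [Φ]
  refine Nat.sInf_le ⟨D, fun X hX => ?_, fun X Y => ?_⟩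
  · have := Relation.TransGen.lift Φ (p := (· > ·)) hΦ X X hX
    rw [Relation.transGen_eq_self] at this
    exact lt_irrefl _ this
  rw [addIsolated_adj]
  constructor
  · rintro ⟨a, b, rfl, rfl, hab⟩
    obtain ⟨i, ha, hb⟩ := hcover a b hab
    exact ⟨by simpa using hab.ne, σ i, ⟨a, i, rfl, ha, rfl⟩, ⟨b, i, rfl, hb, rfl⟩⟩
  · rintro ⟨hne, _, ⟨a, i, rfl, ha, rfl⟩, ⟨b, j, rfl, hb, hji⟩⟩
    obtain rfl := hσ hji
    exact ⟨a, b, rfl, rfl, hclique _ ha hb (by simpa [eq_comm] using hne)⟩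

/-- `τ w` is the vertex of largest rank below `w`, if there is one. -/
lemma exists_injective_pred [Finite V] {ρ : V → ℕ} (hρ : Injective ρ) :
    ∃ τ : V → Option V, Injective τ ∧ ∀ w b, τ w = some b → ρ b < ρ w := by
  have key : ∀ w, ∃ o : Option V, ∀ u, ρ u < ρ w ↔ ∃ b ∈ o, ρ u ≤ ρ b := by
    intro w
    by_cases hw : ∃ u, ρ u < ρ w
    · obtain ⟨b, hb, hmax⟩ := Set.exists_max_image {u | ρ u < ρ w} ρ (Set.toFinite _) hw
      exact ⟨some b, fun u => ⟨fun hu => ⟨b, rfl, hmax u hu⟩, fun ⟨_, hb', hu⟩ => by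
        cases hb'; exact hu.trans_lt hb⟩⟩
    · exact ⟨none, fun u => ⟨fun hu => (hw ⟨u, hu⟩).elim, by simp⟩⟩
  choose τ hτ using key
  refine ⟨τ, fun w₁ w₂ h => hρ ?_, fun w b hb => (hτ w b).2 ⟨b, hb, le_rfl⟩⟩
  have hiff : ∀ u, ρ u < ρ w₁ ↔ ρ u < ρ w₂ := fun u => by rw [hτ, h, ← hτ]
  have := hiff w₁
  have := hiff w₂
  omega

structure RankedCliqueFamily (G : SimpleGraph V) where
  rank : V → ℕ
  rank_injective : Injective rank
  clique : V → Set V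
  isClique : ∀ v, G.IsClique (clique v)
  rank_le : ∀ v, ∀ u ∈ clique v, rank v ≤ rank u

namespace RankedCliqueFamily

variable {G : SimpleGraph V} (F : RankedCliqueFamily G)

def coverGraph : SimpleGraph V where
  Adj a b := a ≠ b ∧ ∃ v, a ∈ F.clique v ∧ b ∈ F.clique v
  symm := ⟨fun _ _ ⟨hab, v, ha, hb⟩ => ⟨hab.symm, v, hb, ha⟩⟩
  loopless := ⟨fun _ h => h.1 rfl⟩

lemma coverGraph_le : F.coverGraph ≤ G := fun _ _ ⟨hab, v, ha, hb⟩ => F.isClique v ha hb hab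

theorem competitionNumber_le [Finite V] :
    competitionNumber G ≤ (G.edgeSet \ F.coverGraph.edgeSet).ncard + 1 := by
  obtain ⟨τ, hτ, hτρ⟩ := exists_injective_pred F.rank_injective
  let U := ↥(G.edgeSet \ F.coverGraph.edgeSet)
  let e : U ≃ Fin (G.edgeSet \ F.coverGraph.edgeSet).ncard := Finite.equivFin U
  let σ : V ⊕ U → V ⊕ Fin ((G.edgeSet \ F.coverGraph.edgeSet).ncard + 1) :=
    Sum.elim (fun w => (τ w).elim (Sum.inr 0) Sum.inl) (fun u => Sum.inr (e u).succ)
  refine competitionNumber_le_of_cliques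
    (Sum.elim F.clique fun u : U => {a | a ∈ (u : Sym2 V)}) σ F.rank ?_ ?_ ?_ ?_
  · rintro (v | ⟨u, hu, -⟩)
    · exact F.isClique v
    · intro a ha b hb hab
      rwa [← mem_edgeSet, ← (Sym2.mem_and_mem_iff hab).1 ⟨ha, hb⟩]
  · intro a b hab
    by_cases hcov : F.coverGraph.Adj a b
    · obtain ⟨-, v, ha, hb⟩ := hcov
      exact ⟨Sum.inl v, ha, hb⟩
    · exact ⟨Sum.inr ⟨s(a, b), hab, hcov⟩, Sym2.mem_mk_left a b, Sym2.mem_mk_right a b⟩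
  · rintro (w₁ | u₁) (w₂ | u₂) h <;> simp only [σ, Sum.elim_inl, Sum.elim_inr] at h
    · congr 1
      refine hτ ?_
      cases h₁ : τ w₁ <;> cases h₂ : τ w₂ <;> simp_all
    · cases h₁ : τ w₁ <;> simp [h₁, eq_comm (a := (0 : Fin _))] at h
    · cases h₂ : τ w₂ <;> simp [h₂] at h
    · simpa using e.injective (Fin.succ_injective _ (Sum.inr_injective h))
  · rintro (w | u) a ha b hb
    · cases hw : τ w <;> simp only [σ, Sum.elim_inl, hw, Option.elim] at hb
      · cases hb
      · cases hb
        exact (hτρ w _ hw).trans_le (F.rank_le w a ha)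
    · cases hb

end RankedCliqueFamily

namespace SimpleGraph

def CoversTriangles (H G : SimpleGraph V) : Prop :=
  ∀ a b c, G.Adj a b → G.Adj b c → G.Adj c a → H.Adj a b

variable {G : SimpleGraph V}

/-- Shortest paths from the other vertices to `r` avoid `x`. -/
lemma Connected.induce_compl_singleton_of_dist_le (hG : G.Connected) {r x : V} (hrx : r ≠ x)
    (hx : ∀ u, G.dist r u ≤ G.dist r x) : (G.induce {x}ᶜ).Connected := by
  classical
  suffices h : ∀ u (hu : u ∈ ({x}ᶜ : Set V)), (G.induce {x}ᶜ).Reachable ⟨r, hrx⟩ ⟨u, hu⟩ from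
    (connected_iff _).2 ⟨fun u v => (h u u.2).symm.trans (h v v.2), ⟨⟨r, hrx⟩⟩⟩
  intro u hu
  obtain ⟨p, -, hp⟩ := (hG r u).exists_path_of_dist
  have hxp : ∀ z ∈ p.support, z ∈ ({x}ᶜ : Set V) := by
    rintro z hz rfl
    have := p.length_takeUntil_lt_length hz (Ne.symm hu)
    have := G.dist_le (p.takeUntil z hz)
    have := hx u
    omega
  exact ⟨p.induce _ hxp⟩

lemma ncard_isNClique_induce_le [Finite V] (s : Set V) (n : ℕ) :
    {T : Finset s | (G.induce s).IsNClique n T}.ncard ≤ {T : Finset V | G.IsNClique n T}.ncard :=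
  Set.ncard_le_ncard_of_injOn (fun T => T.map (Embedding.subtype _))
    (fun _ hT => hT.map.mono (map_comap_le _ _)) (Finset.map_injective _).injOn

lemma four_le_ncard_isNClique_three [Finite V] {s : Finset V} (hs : G.IsClique (s : Set V))
    (h4 : 4 ≤ s.card) : 4 ≤ {T : Finset V | G.IsNClique 3 T}.ncard := by
  calc 4 = Nat.choose 4 3 := rfl
    _ ≤ Nat.choose s.card 3 := Nat.choose_le_choose 3 h4
    _ = ((s.powersetCard 3 : Finset (Finset V)) : Set (Finset V)).ncard := by
      rw [Set.ncard_coe_finset, Finset.card_powersetCard]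
    _ ≤ _ := Set.ncard_le_ncard fun T hT => by
      obtain ⟨hTs, hT3⟩ := Finset.mem_powersetCard.1 hT
      exact ⟨hs.subset (by simpa using hTs), hT3⟩

/-- Otherwise `T₁, T₂, S₁, S₂` would be four distinct triangles. -/
lemma exists_isNClique_three_of_ncard_le_three [Finite V]
    (htri : {T : Finset V | G.IsNClique 3 T}.ncard ≤ 3) {x y : V} {T₁ T₂ S₁ S₂ : Finset V}
    (hT₁ : G.IsNClique 3 T₁) (hT₂ : G.IsNClique 3 T₂) (hS₁ : G.IsNClique 3 S₁)
    (hS₂ : G.IsNClique 3 S₂) (hT : T₁ ≠ T₂) (hS : S₁ ≠ S₂) (hx₁ : x ∈ T₁) (hx₂ : x ∈ T₂)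
    (hy₁ : y ∈ S₁) (hy₂ : y ∈ S₂) : ∃ T, G.IsNClique 3 T ∧ x ∈ T ∧ y ∈ T := by
  classical
  by_contra! h
  have hcard : ({T₁, T₂, S₁, S₂} : Finset (Finset V)).card = 4 := by
    have h₁₁ : T₁ ≠ S₁ := by rintro rfl; exact h T₁ hT₁ hx₁ hy₁
    have h₁₂ : T₁ ≠ S₂ := by rintro rfl; exact h T₁ hT₁ hx₁ hy₂
    have h₂₁ : T₂ ≠ S₁ := by rintro rfl; exact h T₂ hT₂ hx₂ hy₁
    have h₂₂ : T₂ ≠ S₂ := by rintro rfl; exact h T₂ hT₂ hx₂ hy₂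
    simp [Finset.card_insert_of_notMem, *]
  have := Set.ncard_le_ncard (t := {T : Finset V | G.IsNClique 3 T})
    (s := (({T₁, T₂, S₁, S₂} : Finset (Finset V)) : Set (Finset V))) (by
      intro T hT
      simp only [Finset.coe_insert, Finset.coe_singleton, Set.mem_insert_iff,
        Set.mem_singleton_iff] at hT
      rcases hT with rfl | rfl | rfl | rfl <;> assumption)
  rw [Set.ncard_coe_finset, hcard] at this
  omega

/-- The ends `x, y` of a diametral pair are non-cut vertices; if they are adjacent, `G` is
complete, and otherwise they cannot both lie on two triangles. -/
theorem exists_connected_induce_compl_singleton_of_ncard_le_three [Finite V] [Nontrivial V]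
    (hG : G.Connected) (htri : {T : Finset V | G.IsNClique 3 T}.ncard ≤ 3) :
    ∃ x, (G.induce {x}ᶜ).Connected ∧ {T : Finset V | G.IsNClique 3 T ∧ x ∈ T}.Subsingleton := by
  classical
  obtain ⟨⟨x, y⟩, hmax⟩ := Finite.exists_max fun p : V × V => G.dist p.1 p.2
  have hdist : ∀ a b, G.dist a b ≤ G.dist x y := fun a b => hmax (a, b)
  have hxy : x ≠ y := by
    rintro rfl
    obtain ⟨a, b, hab⟩ := exists_pair_ne V
    have := hdist a b
    rw [dist_self, Nat.le_zero, hG.dist_eq_zero_iff] at this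
    exact hab this
  have hx : (G.induce {x}ᶜ).Connected :=
    hG.induce_compl_singleton_of_dist_le hxy.symm fun u => by
      rw [dist_comm, dist_comm (u := y)]; exact hdist u y
  have hy : (G.induce {y}ᶜ).Connected := hG.induce_compl_singleton_of_dist_le hxy (hdist x)
  by_cases hadj : G.Adj x y
  · refine ⟨x, hx, fun T₁ ⟨h₁, hx₁⟩ T₂ ⟨h₂, hx₂⟩ => by_contra fun hne => ?_⟩
    have hclique : G.IsClique ((T₁ ∪ T₂ : Finset V) : Set V) := fun a _ b _ hab => by
      have := hdist a b
      rw [dist_eq_one_iff_adj.2 hadj] at this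
      have := hG.pos_dist_of_ne hab
      exact dist_eq_one_iff_adj.1 (by omega)
    have hcard : 4 ≤ (T₁ ∪ T₂).card := by
      by_contra! h3
      have e₁ := Finset.eq_of_subset_of_card_le (Finset.subset_union_left (s₂ := T₂))
        (by rw [h₁.2]; omega)
      have e₂ := Finset.eq_of_subset_of_card_le (Finset.subset_union_right (s₁ := T₁))
        (by rw [h₂.2]; omega)
      exact hne (e₁.trans e₂.symm)
    have := four_le_ncard_isNClique_three hclique hcard
    omega
  · by_contra! h
    obtain ⟨T₁, ⟨hT₁, hx₁⟩, T₂, ⟨hT₂, hx₂⟩, hT⟩ := h x hx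
    obtain ⟨S₁, ⟨hS₁, hy₁⟩, S₂, ⟨hS₂, hy₂⟩, hS⟩ := h y hy
    obtain ⟨T, hT3, hxT, hyT⟩ := exists_isNClique_three_of_ncard_le_three htri hT₁ hT₂ hS₁ hS₂
      hT hS hx₁ hx₂ hy₁ hy₂
    exact hadj (hT3.1 hxT hyT hxy)

/-- The witness is the triangle through `x` if there is one, and the edge `xu` otherwise. -/
lemma exists_isClique_superset_triangles {x u : V} (hxu : G.Adj x u)
    (hx : {T : Finset V | G.IsNClique 3 T ∧ x ∈ T}.Subsingleton) :
    ∃ K : Set V, G.IsClique K ∧ x ∈ K ∧ (∃ u ∈ K, u ≠ x) ∧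
      ∀ a b, G.Adj x a → G.Adj a b → G.Adj b x → a ∈ K ∧ b ∈ K := by
  classical
  have triple : ∀ a b, G.Adj x a → G.Adj a b → G.Adj b x → G.IsNClique 3 {x, a, b} :=
    fun a b hxa hab hbx => is3Clique_triple_iff.2 ⟨hxa, hbx.symm, hab⟩
  by_cases hT : ∃ T : Finset V, G.IsNClique 3 T ∧ x ∈ T
  · obtain ⟨T, hT, hxT⟩ := hT
    obtain ⟨v, hvT, hvx⟩ := Finset.exists_mem_ne (by rw [hT.2]; norm_num) x
    refine ⟨T, hT.1, hxT, ⟨v, hvT, hvx⟩, fun a b hxa hab hbx => ?_⟩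
    rw [hx ⟨hT, hxT⟩ ⟨triple a b hxa hab hbx, by simp⟩]
    simp
  · refine ⟨{x, u}, isClique_pair.2 fun _ => hxu, by simp, ⟨u, by simp, hxu.ne.symm⟩,
      fun a b hxa hab hbx => (hT ⟨_, triple a b hxa hab hbx, by simp⟩).elim⟩

end SimpleGraph

namespace RankedCliqueFamily

variable {G : SimpleGraph V} {x : V} {K : Set V}

open Classical in
noncomputable def cons (hK : G.IsClique K) (F : RankedCliqueFamily (G.induce {x}ᶜ)) :
    RankedCliqueFamily G where
  rank v := if h : v = x then 0 else F.rank ⟨v, h⟩ + 1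
  rank_injective a b hab := by
    by_cases ha : a = x <;> by_cases hb : b = x <;>
      simp only [ha, hb, dite_true, dite_false] at hab
    · exact ha.trans hb.symm
    · omega
    · omega
    · exact congrArg Subtype.val (F.rank_injective (a₁ := ⟨a, ha⟩) (a₂ := ⟨b, hb⟩) (by omega))
  clique v := if h : v = x then K else Subtype.val '' F.clique ⟨v, h⟩
  isClique v := by
    by_cases hv : v = x
    · simpa [hv] using hK
    · simp only [hv, dite_false]
      exact ((F.isClique _).map (f := Embedding.subtype _)).mono (map_comap_le _ _)
  rank_le v u hu := by
    by_cases hv : v = x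
    · simp [hv]
    · simp only [hv, dite_false] at hu ⊢
      obtain ⟨u, hu, rfl⟩ := hu
      have hux : (u : V) ≠ x := u.2
      simpa [hux] using F.rank_le _ u hu

variable (hK : G.IsClique K)

lemma coverGraph_cons_adj_val (F : RankedCliqueFamily (G.induce {x}ᶜ))
    {a b : ({x}ᶜ : Set V)} (h : F.coverGraph.Adj a b) : (cons hK F).coverGraph.Adj a b := by
  obtain ⟨hab, v, ha, hb⟩ := h
  have hvx : (v : V) ≠ x := v.2
  exact ⟨fun h => hab (Subtype.ext h), v, by simpa [cons, hvx] using ⟨a.2, ha⟩,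
    by simpa [cons, hvx] using ⟨b.2, hb⟩⟩

lemma coverGraph_cons_adj_of_mem (F : RankedCliqueFamily (G.induce {x}ᶜ))
    {a b : V} (ha : a ∈ K) (hb : b ∈ K) (hab : a ≠ b) : (cons hK F).coverGraph.Adj a b :=
  ⟨hab, x, by simpa [cons] using ha, by simpa [cons] using hb⟩

lemma connected_coverGraph_cons {F : RankedCliqueFamily (G.induce {x}ᶜ)}
    (hF : F.coverGraph.Connected) (hxK : x ∈ K) {v : V} (hvK : v ∈ K) (hvx : v ≠ x) :
    (cons hK F).coverGraph.Connected := by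
  let φ : F.coverGraph →g (cons hK F).coverGraph := ⟨Subtype.val, coverGraph_cons_adj_val hK F⟩
  have hvx' : (cons hK F).coverGraph.Adj v x := coverGraph_cons_adj_of_mem hK F hvK hxK hvx
  have hreach : ∀ a, (cons hK F).coverGraph.Reachable a x := fun a => by
    by_cases ha : a = x
    · rw [ha]
    · exact ((hF ⟨a, ha⟩ ⟨v, hvx⟩).map φ).trans hvx'.reachable
  exact (connected_iff _).2 ⟨fun a b => (hreach a).trans (hreach b).symm, ⟨x⟩⟩

lemma coversTriangles_coverGraph_cons {F : RankedCliqueFamily (G.induce {x}ᶜ)}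
    (hF : F.coverGraph.CoversTriangles (G.induce {x}ᶜ)) (hxK : x ∈ K)
    (hKtri : ∀ a b, G.Adj x a → G.Adj a b → G.Adj b x → a ∈ K ∧ b ∈ K) :
    (cons hK F).coverGraph.CoversTriangles G := by
  intro a b c hab hbc hca
  by_cases ha : a = x
  · subst ha
    exact coverGraph_cons_adj_of_mem hK F hxK (hKtri b c hab hbc hca).1 hab.ne
  by_cases hb : b = x
  · subst hb
    exact coverGraph_cons_adj_of_mem hK F (hKtri c a hbc hca hab).2 hxK hab.ne
  by_cases hc : c = x
  · subst hc
    obtain ⟨haK, hbK⟩ := hKtri a b hca hab hbc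
    exact coverGraph_cons_adj_of_mem hK F haK hbK hab.ne
  exact coverGraph_cons_adj_val hK F (hF ⟨a, ha⟩ ⟨b, hb⟩ ⟨c, hc⟩ hab hbc hca)

end RankedCliqueFamily

theorem exists_rankedCliqueFamily [Finite V] (G : SimpleGraph V) (hG : G.Connected)
    (htri : {T : Finset V | G.IsNClique 3 T}.ncard ≤ 3) :
    ∃ F : RankedCliqueFamily G, F.coverGraph.Connected ∧ F.coverGraph.CoversTriangles G := by
  induction V using Finite.induction_subsingleton_or_nontrivial with
  | hbase W =>
    let F : RankedCliqueFamily G :=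
      ⟨0, fun a b _ => Subsingleton.elim a b, fun v => {v}, fun _ => isClique_singleton _,
        by simp⟩
    exact ⟨F, (connected_iff _).2 ⟨fun a b => by rw [Subsingleton.elim a b], hG.nonempty⟩,
      fun a b _ hab => (hab.ne (Subsingleton.elim a b)).elim⟩
  | hstep W ih =>
    obtain ⟨x, hx, hxT⟩ := exists_connected_induce_compl_singleton_of_ncard_le_three hG htri
    obtain ⟨u, hxu⟩ := hG.preconnected.exists_adj_of_nontrivial x
    obtain ⟨K, hK, hxK, ⟨v, hvK, hvx⟩, hKtri⟩ := exists_isClique_superset_triangles hxu hxT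
    obtain ⟨F, hF, hFtri⟩ := ih ({x}ᶜ : Set W) (Finite.card_subtype_lt (x := x) (by simp))
      (G.induce {x}ᶜ) hx ((ncard_isNClique_induce_le _ 3).trans htri)
    exact ⟨_, RankedCliqueFamily.connected_coverGraph_cons hK hF hxK hvK hvx,
      RankedCliqueFamily.coversTriangles_coverGraph_cons hK hFtri hxK hKtri⟩

/-- Closed walks of length 3 in a simple graph are exactly the triangles. -/
def triangleSpace (G : SimpleGraph V) : Submodule (ZMod 2) (G.edgeSet → ZMod 2) :=
  Submodule.span (ZMod 2) {f | ∃ (v : V) (w : G.Walk v v), w.length = 3 ∧ f = cycleVec G w}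

namespace SimpleGraph

variable {G : SimpleGraph V}

lemma cycleVec_eq_count [DecidableEq V] {H : SimpleGraph V} {v : V} {w : H.Walk v v}
    (hw : w.edges.Nodup) (e : G.edgeSet) :
    cycleVec G w e = (w.edges.count (e : Sym2 V) : ZMod 2) := by
  unfold cycleVec
  split_ifs with he
  · rw [List.count_eq_one_of_mem hw he, Nat.cast_one]
  · rw [List.count_eq_zero_of_not_mem he, Nat.cast_zero]

lemma cycleVec_rotate [DecidableEq V] {H : SimpleGraph V} {v u : V} (w : H.Walk v v)
    (hu : u ∈ w.support) : cycleVec G (w.rotate u hu) = cycleVec G w := by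
  ext e
  unfold cycleVec
  congr 1
  exact propext (w.rotate_edges u hu).perm.mem_iff

/-- The chord `xy` is counted twice in the sum, hence vanishes over `𝔽₂`. -/
lemma Walk.IsCycle.exists_split_of_chord {x y : V} {w : G.Walk x x} (hw : w.IsCycle)
    (hy : y ∈ w.support) (hxy : G.Adj x y) (hchord : s(x, y) ∉ w.edges) :
    ∃ (c₁ : G.Walk y y) (c₂ : G.Walk x x), c₁.IsCycle ∧ c₂.IsCycle ∧ c₁.length < w.length ∧
      c₂.length < w.length ∧ cycleVec G w = cycleVec G c₁ + cycleVec G c₂ := by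
  classical
  have hpq := w.take_spec hy
  set p := w.takeUntil y hy
  set q := w.dropUntil y hy
  have hedges : w.edges = p.edges ++ q.edges := by rw [← hpq, Walk.edges_append]
  have hlen : w.length = p.length + q.length := by rw [← hpq, Walk.length_append]
  have hp : s(y, x) ∉ p.edges := fun h => hchord (by
    rw [hedges, Sym2.eq_swap]; exact List.mem_append_left _ h)
  have hq : s(x, y) ∉ q.edges := fun h => hchord (by simp [hedges, h])
  have hc₁ : (Walk.cons hxy.symm p).IsCycle :=
    (Walk.cons_isCycle_iff _ _).2 ⟨hw.isPath_takeUntil hy, hp⟩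
  have hc₂ : (Walk.cons hxy q).IsCycle :=
    (Walk.cons_isCycle_iff _ _).2
      ⟨(hpq ▸ hw).isPath_of_append_right (Walk.not_nil_of_ne hxy.ne), hq⟩
  have h₁ := hc₁.three_le_length
  have h₂ := hc₂.three_le_length
  simp only [Walk.length_cons] at h₁ h₂
  refine ⟨_, _, hc₁, hc₂, by simp; omega, by simp; omega, ?_⟩
  ext e
  rw [Pi.add_apply, cycleVec_eq_count hw.edges_nodup, cycleVec_eq_count hc₁.edges_nodup,
    cycleVec_eq_count hc₂.edges_nodup]
  simp only [Walk.edges_cons, List.count_cons, hedges, List.count_append, Sym2.eq_swap (a := y)]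
  push_cast
  ring_nf
  rw [show (2 : ZMod 2) = 0 from rfl, mul_zero, add_zero]

/-- Split along chords until the cycle is induced: then it is a hole or a triangle. -/
theorem Walk.IsCycle.cycleVec_mem {v : V} {w : G.Walk v v} (hw : w.IsCycle) :
    cycleVec G w ∈ holeSpace G ⊔ triangleSpace G := by
  classical
  induction hn : w.length using Nat.strong_induction_on generalizing v with
  | _ n ih =>
  by_cases hchord : ∃ x y, x ∈ w.support ∧ y ∈ w.support ∧ G.Adj x y ∧ s(x, y) ∉ w.edges
  · obtain ⟨x, y, hx, hy, hxy, hxyw⟩ := hchord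
    obtain ⟨c₁, c₂, hc₁, hc₂, hl₁, hl₂, hsum⟩ := (hw.rotate hx).exists_split_of_chord
      ((w.mem_support_rotate_iff x hx).2 hy) hxy
      (by rwa [(w.rotate_edges x hx).perm.mem_iff])
    rw [← cycleVec_rotate w hx, hsum]
    simp only [Walk.length_rotate] at hl₁ hl₂
    exact add_mem (ih _ (hn ▸ hl₁) hc₁ rfl) (ih _ (hn ▸ hl₂) hc₂ rfl)
  · push Not at hchord
    rcases le_or_gt 4 w.length with h4 | h4
    · exact Submodule.mem_sup_left (Submodule.subset_span ⟨v, w, ⟨hw, h4, hchord⟩, rfl⟩)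
    · have h3 : w.length = 3 := by have := hw.three_le_length; omega
      exact Submodule.mem_sup_right (Submodule.subset_span ⟨v, w, h3, rfl⟩)

/-- The fundamental cycle of an edge `xy` of `G` outside a spanning subgraph `H`. -/
lemma exists_isCycle_of_not_adj {H : SimpleGraph V} (hHG : H ≤ G) {x y : V}
    (hreach : H.Reachable y x) (hxy : G.Adj x y) (hH : ¬ H.Adj x y) :
    ∃ c : G.Walk x x, c.IsCycle ∧ s(x, y) ∈ c.edges ∧
      ∀ e ∈ c.edges, e = s(x, y) ∨ e ∈ H.edgeSet := by
  obtain ⟨p, hp⟩ := hreach.exists_isPath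
  have hpH : ∀ e ∈ (p.mapLe hHG).edges, e ∈ H.edgeSet := by
    rw [Walk.edges_mapLe_eq_edges]; exact p.edges_subset_edgeSet
  refine ⟨Walk.cons hxy (p.mapLe hHG),
    (Walk.cons_isCycle_iff _ _).2 ⟨hp.mapLe hHG, fun h => hH (hpH _ h)⟩, by simp, ?_⟩
  simp only [Walk.edges_cons, List.mem_cons]
  exact fun e he => he.imp_right (hpH e)

lemma CoversTriangles.edges_subset {H : SimpleGraph V} (htri : H.CoversTriangles G) {v : V}
    (w : G.Walk v v) (hw : w.length = 3) : ∀ e ∈ w.edges, e ∈ H.edgeSet := by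
  match w, hw with
  | .cons h₁ (.cons h₂ (.cons h₃ .nil)), _ =>
    simp only [Walk.edges_cons, Walk.edges_nil, List.mem_cons, List.not_mem_nil, or_false]
    rintro e (rfl | rfl | rfl)
    exacts [htri _ _ _ h₁ h₂ h₃, htri _ _ _ h₂ h₃ h₁, htri _ _ _ h₃ h₁ h₂]

def restrictDiff (G H : SimpleGraph V) :
    (G.edgeSet → ZMod 2) →ₗ[ZMod 2] (↥(G.edgeSet \ H.edgeSet) → ZMod 2) :=
  LinearMap.funLeft _ _ (Set.inclusion Set.sdiff_subset)

lemma triangleSpace_le_ker_restrictDiff {H : SimpleGraph V} (htri : H.CoversTriangles G) :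
    triangleSpace G ≤ LinearMap.ker (restrictDiff G H) := by
  refine Submodule.span_le.2 ?_
  rintro _ ⟨v, w, hw, rfl⟩
  ext u
  have hu : (u : Sym2 V) ∉ w.edges := fun h => u.2.2 (htri.edges_subset w hw _ h)
  simp [restrictDiff, cycleVec, hu]

lemma restrictDiff_cycleVec [DecidableEq V] {H : SimpleGraph V} {x y : V} {c : G.Walk x x}
    (hxyc : s(x, y) ∈ c.edges) (hcH : ∀ e ∈ c.edges, e = s(x, y) ∨ e ∈ H.edgeSet)
    (hxy : s(x, y) ∈ G.edgeSet \ H.edgeSet) :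
    restrictDiff G H (cycleVec G c) = Pi.single ⟨s(x, y), hxy⟩ 1 := by
  ext ⟨e, he⟩
  by_cases hexy : e = s(x, y)
  · subst hexy
    simp [restrictDiff, cycleVec, hxyc]
  · rw [Pi.single_eq_of_ne fun h => hexy (congrArg Subtype.val h)]
    have : e ∉ c.edges := fun h => hexy ((hcH e h).resolve_right he.2)
    simp [restrictDiff, cycleVec, this]

/-- The restriction kills the triangles and maps the fundamental cycles, which are sums of holes
and triangles, to the standard basis: so it maps the hole space onto `𝔽₂^(E(G) \ E(H))`. -/
theorem ncard_edgeSet_diff_le_holeDim [Finite V] {H : SimpleGraph V} (hHG : H ≤ G)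
    (hH : H.Connected) (htri : H.CoversTriangles G) :
    (G.edgeSet \ H.edgeSet).ncard ≤ holeDim G := by
  classical
  let π := restrictDiff G H
  have hsingle : ∀ u, Pi.single u 1 ∈ (holeSpace G).map π := by
    rintro ⟨e, he⟩
    induction e using Sym2.ind with | _ x y => ?_
    obtain ⟨c, hc, hxyc, hcH⟩ := exists_isCycle_of_not_adj hHG (hH y x) he.1 he.2
    obtain ⟨h, hh, t, ht, hsum⟩ := Submodule.mem_sup.1 hc.cycleVec_mem
    refine ⟨h, hh, ?_⟩
    have ht0 : π t = 0 := triangleSpace_le_ker_restrictDiff htri ht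
    rw [← add_zero (π h), ← ht0, ← map_add, hsum, restrictDiff_cycleVec hxyc hcH he]
  have htop : (holeSpace G).map π = ⊤ := by
    rw [eq_top_iff, ← (Pi.basisFun (ZMod 2) _).span_eq, Submodule.span_le]
    rintro _ ⟨u, rfl⟩
    simpa using hsingle u
  have := Fintype.ofFinite ↥(G.edgeSet \ H.edgeSet)
  calc (G.edgeSet \ H.edgeSet).ncard
      = Module.finrank (ZMod 2) (↥(G.edgeSet \ H.edgeSet) → ZMod 2) := by
        rw [Module.finrank_pi, ← Nat.card_eq_fintype_card, Nat.card_coe_set_eq]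
    _ = Module.finrank (ZMod 2) ((holeSpace G).map π) := by rw [htop, finrank_top]
    _ ≤ holeDim G := Submodule.finrank_map_le _ _

end SimpleGraph

end

/-- If a connected graph `G` has at most three triangles, then
`k(G) ≤ dim H(G) + 1`. -/
theorem stmt13 {V : Type*} [Fintype V] (G : SimpleGraph V)
    (hconn : G.Connected) (htri : {s : Finset V | G.IsNClique 3 s}.ncard ≤ 3) :
    competitionNumber G ≤ holeDim G + 1 := by
  obtain ⟨F, hF, hFtri⟩ := exists_rankedCliqueFamily G hconn htri
  calc competitionNumber G
      ≤ (G.edgeSet \ F.coverGraph.edgeSet).ncard + 1 := F.competitionNumber_le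
    _ ≤ holeDim G + 1 := by
      gcongr
      exact ncard_edgeSet_diff_le_holeDim F.coverGraph_le hF hFtri
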